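/- If X and Y are comonotonic random variables, then for every α ∈ (0,1) the lower quantile function is additive: F_{X+Y}^←(α) = F_X^←(α) + F_Y^←(α). -/

import Mathlib

open MeasureTheory

/-- The lower quantile function of a measure on `ℝ`. -/
noncomputable def lq (μ : Measure ℝ) (u : ℝ) : ℝ :=
  sInf {x : ℝ | u ≤ (μ (Set.Iic x)).toReal}

/-!
The law of `X + Y` is the image of the uniform law on `[0, 1]` under `g = q_X + q_Y`, a sum of
lower quantile functions, hence increasing and left-continuous on `(0, 1)`. For such `g` and
`α ∈ (0, 1)` one has `g α ≤ x ↔ α ≤ P(g(U) ≤ x)`: the forward direction because `(0, α]` lies in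
`{g ≤ x}`, the backward one because left-continuity puts `{g ≤ x}` inside `[0, β] ∪ {1}` for some
`β < α` once `x < g α`. This equivalence says exactly that `g α` is the lower `α`-quantile of `g(U)`.
-/

open Set Filter Topology ProbabilityTheory

section Quantile

variable (μ : Measure ℝ) {u x : ℝ}

lemma bddBelow_setOf_le_cdf (hu : 0 < u) : BddBelow {x | u ≤ cdf μ x} := by
  obtain ⟨x₀, hx₀⟩ := ((tendsto_cdf_atBot μ).eventually (eventually_lt_nhds hu)).exists
  exact ⟨x₀, fun y hy => le_of_not_gt fun hyx => (hy.trans ((cdf μ).mono hyx.le)).not_gt hx₀⟩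

lemma nonempty_setOf_le_cdf (hu : u < 1) : {x | u ≤ cdf μ x}.Nonempty :=
  ((tendsto_cdf_atTop μ).eventually (eventually_gt_nhds hu)).exists.imp fun _ => le_of_lt

variable [IsProbabilityMeasure μ]

-- Right-continuity of `cdf μ` is what makes the infimum attained.
lemma lq_le_iff (hu : u ∈ Ioo 0 1) : lq μ u ≤ x ↔ u ≤ cdf μ x := by
  rw [lq, show {x | u ≤ (μ (Iic x)).toReal} = {x | u ≤ cdf μ x} by
    simp only [cdf_eq_real, measureReal_def]]
  refine ⟨fun h => ?_, fun h => csInf_le (bddBelow_setOf_le_cdf μ hu.1) h⟩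
  refine ge_of_tendsto (((cdf μ).right_continuous x).mono Ioi_subset_Ici_self) ?_
  filter_upwards [self_mem_nhdsWithin] with y (hy : x < y)
  obtain ⟨z, hz, hzy⟩ := exists_lt_of_csInf_lt (nonempty_setOf_le_cdf μ hu.2) (h.trans_lt hy)
  exact hz.trans ((cdf μ).mono hzy.le)

lemma le_cdf_lq (hu : u ∈ Ioo 0 1) : u ≤ cdf μ (lq μ u) :=
  (lq_le_iff μ hu).1 le_rfl

lemma monotoneOn_lq : MonotoneOn (lq μ) (Ioo 0 1) := fun _ ha _ hb hab =>
  (lq_le_iff μ ha).2 (hab.trans (le_cdf_lq μ hb))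

lemma continuousWithinAt_lq_Iio {α : ℝ} (hα : α ∈ Ioo 0 1) :
    ContinuousWithinAt (lq μ) (Iio α) α := by
  refine tendsto_order.2 ⟨fun a ha => ?_, fun a ha => ?_⟩
  · have hFa : cdf μ a < α := lt_of_not_ge fun h => ha.not_ge ((lq_le_iff μ hα).2 h)
    filter_upwards [Ioo_mem_nhdsLT (max_lt hFa hα.1)] with β hβ
    have hβ01 : β ∈ Ioo 0 1 := ⟨(le_max_right _ _).trans_lt hβ.1, hβ.2.trans hα.2⟩
    exact lt_of_not_ge fun h => ((le_max_left _ _).trans_lt hβ.1).not_ge ((lq_le_iff μ hβ01).1 h)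
  · filter_upwards [Ioo_mem_nhdsLT hα.1] with β hβ
    exact (monotoneOn_lq μ ⟨hβ.1, hβ.2.trans hα.2⟩ hα hβ.2.le).trans_lt ha

end Quantile

section UniformPushforward

lemma aemeasurable_restrict_Icc_of_monotoneOn {g : ℝ → ℝ} (hg : MonotoneOn g (Ioo 0 1)) :
    AEMeasurable g (volume.restrict (Icc 0 1)) := by
  rw [← Measure.restrict_congr_set Ioo_ae_eq_Icc]
  exact aemeasurable_restrict_of_monotoneOn measurableSet_Ioo hg

instance isProbabilityMeasure_volume_restrict_Icc_zero_one :
    IsProbabilityMeasure (volume.restrict (Icc (0 : ℝ) 1)) :=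
  ⟨by simp⟩

lemma measureReal_restrict_Icc_Ioc {α : ℝ} (hα : α ∈ Ioo 0 1) :
    (volume.restrict (Icc (0 : ℝ) 1)).real (Ioc 0 α) = α := by
  rw [measureReal_restrict_apply measurableSet_Ioc,
    inter_eq_self_of_subset_left (Ioc_subset_Icc_self.trans (Icc_subset_Icc le_rfl hα.2.le)),
    Real.volume_real_Ioc_of_le hα.1.le, sub_zero]

lemma measureReal_restrict_Icc_compl_Ioo {β : ℝ} (hβ : β ∈ Ioo 0 1) :
    (volume.restrict (Icc (0 : ℝ) 1)).real (Ioo β 1)ᶜ = β := by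
  rw [probReal_compl_eq_one_sub measurableSet_Ioo, measureReal_restrict_apply measurableSet_Ioo,
    inter_eq_self_of_subset_left (Ioo_subset_Icc_self.trans (Icc_subset_Icc hβ.1.le le_rfl)),
    Real.volume_real_Ioo_of_le hβ.2.le]
  ring

theorem lq_map_restrict_Icc {g : ℝ → ℝ} (hmono : MonotoneOn g (Ioo 0 1)) {α : ℝ}
    (hα : α ∈ Ioo 0 1) (hcont : ContinuousWithinAt g (Iio α) α) :
    lq ((volume.restrict (Icc 0 1)).map g) α = g α := by
  set ρ := volume.restrict (Icc (0 : ℝ) 1)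
  have hg : AEMeasurable g ρ := aemeasurable_restrict_Icc_of_monotoneOn hmono
  have := Measure.isProbabilityMeasure_map hg
  refine eq_of_forall_ge_iff fun x => ?_
  rw [lq_le_iff _ hα, cdf_eq_real, map_measureReal_apply_of_aemeasurable hg measurableSet_Iic]
  change α ≤ ρ.real {u | g u ≤ x} ↔ g α ≤ x
  constructor
  · intro hle
    by_contra! hlt
    obtain ⟨β, hβα, hβ⟩ := ((hcont.eventually (lt_mem_nhds hlt)).and
      (Ioo_mem_nhdsLT hα.1)).exists
    have hβ01 : β ∈ Ioo 0 1 := ⟨hβ.1, hβ.2.trans hα.2⟩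
    have hsub : {u | g u ≤ x} ⊆ (Ioo β 1)ᶜ := fun u hu hu' =>
      (hβα.trans_le (hmono hβ01 ⟨hβ.1.trans hu'.1, hu'.2⟩ hu'.1.le)).not_ge hu
    exact hβ.2.not_ge <|
      (hle.trans (measureReal_mono hsub)).trans_eq (measureReal_restrict_Icc_compl_Ioo hβ01)
  · intro hle
    calc α = ρ.real (Ioc 0 α) := (measureReal_restrict_Icc_Ioc hα).symm
      _ ≤ ρ.real {u | g u ≤ x} := measureReal_mono fun u hu =>
        (hmono ⟨hu.1, hu.2.trans_lt hα.2⟩ hα hu.2).trans hle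

end UniformPushforward

/-- Quantiles are additive for comonotonic random variables. -/
theorem comonotone_quantile_additive {Ω : Type*} [MeasurableSpace Ω]
    (P : Measure Ω) [IsProbabilityMeasure P]
    (X Y : Ω → ℝ) (hX : Measurable X) (hY : Measurable Y)
    (hcom : P.map (fun ω => (X ω, Y ω)) =
      (volume.restrict (Set.Icc (0:ℝ) 1)).map
        (fun u => (lq (P.map X) u, lq (P.map Y) u)))
    (α : ℝ) (hα : α ∈ Set.Ioo (0:ℝ) 1) :
    lq (P.map (fun ω => X ω + Y ω)) α = lq (P.map X) α + lq (P.map Y) α := by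
  have := Measure.isProbabilityMeasure_map (μ := P) hX.aemeasurable
  have := Measure.isProbabilityMeasure_map (μ := P) hY.aemeasurable
  have hmono : MonotoneOn (lq (P.map X) + lq (P.map Y)) (Ioo 0 1) :=
    (monotoneOn_lq _).add (monotoneOn_lq _)
  have hpair : AEMeasurable (fun u => (lq (P.map X) u, lq (P.map Y) u))
      (volume.restrict (Icc 0 1)) :=
    (aemeasurable_restrict_Icc_of_monotoneOn (monotoneOn_lq _)).prodMk
      (aemeasurable_restrict_Icc_of_monotoneOn (monotoneOn_lq _))
  have hlaw : P.map (fun ω => X ω + Y ω) =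
      (volume.restrict (Icc 0 1)).map (lq (P.map X) + lq (P.map Y)) := by
    calc P.map (fun ω => X ω + Y ω)
        = (P.map (fun ω => (X ω, Y ω))).map (fun p => p.1 + p.2) :=
          (Measure.map_map measurable_add (hX.prodMk hY)).symm
      _ = _ := by
          rw [hcom, AEMeasurable.map_map_of_aemeasurable measurable_add.aemeasurable hpair]
          rfl
  rw [hlaw, lq_map_restrict_Icc hmono hα
    ((continuousWithinAt_lq_Iio _ hα).add (continuousWithinAt_lq_Iio _ hα))]
  rfl
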